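/- arXiv:1907.02623 — 2 statements merged into one kernel-verified Lean document; each statement's English description precedes it below -/
import Mathlib

section
/- Let q be a prime power with q ≡ 3 (mod 4), let F be a finite field with q² elements, fix a primitive element ω of F, and let D₀ = C₀⁽⁴⁾ ∪ C₁⁽⁴⁾ and D₂ = C₂⁽⁴⁾ ∪ C₃⁽⁴⁾. Suppose E₀, E₁, E₂, E₃ ⊆ F each have size (q² − q)/2 and satisfy: (i) for every nonzero x ∈ F, Σᵢ₌₀³ N(Eᵢ,Eᵢ;x) = q² − 2q (a difference family of type H); and (ii) for every x ∈ F, N(E₀,E₁;x) + N(E₁,E₀;x) + N(E₂,E₃;x) + N(E₃,E₂;x) = (q−1)² + 2·[x ∈ D₀] − 2·[x ∈ D₂]. In G = ℤ/2ℤ × F, set B₀ = ({0} × D₀) ∪ ({1} × (F ∖ D₀)), B₁ = ({0} × D₂) ∪ ({1} × D₂), B₂ = ({0} × E₀) ∪ ({1} × (F ∖ E₁)), and B₃ = ({0} × E₂) ∪ ({1} × (F ∖ E₃)). Then {B₀, B₁, B₂, B₃} is a difference family with parameters (2q²; q², q²−1, q², q²; 2q²−2) in G, i.e., |B₀| = |B₂|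 = |B₃| = q², |B₁| = q² − 1, and for every nonzero g ∈ G, Σᵢ₌₀³ N(Bᵢ,Bᵢ;g) = 2q² − 2. -/
/-- The number of pairs `(u, v) ∈ A × B` with `u - v = g`. -/
noncomputable def diffCount {G : Type*} [AddGroup G] (A B : Set G) (g : G) : ℕ :=
  Set.ncard {p : G × G | p.1 ∈ A ∧ p.2 ∈ B ∧ p.1 - p.2 = g}

/-- The `N`-th cyclotomic class `C_i^{(N)} = {ω^(i+Nk) : k ∈ ℤ}`. -/
def cyc {F : Type*} [Field F] (ω : F) (N : ℕ) (i : ℤ) : Set F :=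
  {x : F | ∃ k : ℤ, x = ω ^ (i + (N : ℤ) * k)}

open Classical in
/-- Indicator of a proposition, valued in `ℤ`. -/
noncomputable def ind (P : Prop) : ℤ := if P then 1 else 0

/-!
Put `η = halfSign ω = 1_{D₀} - 1_{D₂}`. As `D₀ ∪ D₂ = F^×`, the counts
`N(D₀,D₀;x) ± N(D₂,D₂;x)` are determined by `η`, and everything reduces to
`∑ᵥ η(v) η(v + x) = -1` for `x ≠ 0`. Substituting `v = x / s` makes each summand a function of the
classes of `x`, `s` and `1 + s`; what survives is `|C₀| - |C₂| - 1 = -1` plus a multiple of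
`∑_{r ∈ C₁} ρ(r - 1) - ∑_{r ∈ C₃} ρ(r - 1)` (`ρ` the quadratic character), which vanishes because
the Frobenius `r ↦ r ^ q` swaps `C₁` and `C₃` when `q ≡ 3 mod 4`. In `ℤ/2 × F` the counts of the
`Bᵢ` expand, through complements, into these counts and those of the `Eᵢ`, which hypotheses (i)
and (ii) supply.
-/

open Finset

section Indicator

lemma ind_pos {P : Prop} (h : P) : ind P = 1 := by simp [ind, h]

lemma ind_neg {P : Prop} (h : ¬P) : ind P = 0 := by simp [ind, h]

lemma ind_eq_ite (P : Prop) [Decidable P] : ind P = if P then 1 else 0 := by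
  unfold ind; congr

lemma ind_congr {P Q : Prop} (h : P ↔ Q) : ind P = ind Q := by rw [propext h]

lemma ind_not (P : Prop) : ind (¬P) = 1 - ind P := by
  by_cases h : P <;> simp [ind, h]

lemma ind_and (P Q : Prop) : ind (P ∧ Q) = ind P * ind Q := by
  by_cases hP : P <;> by_cases hQ : Q <;> simp [ind, hP, hQ]

variable {V : Type*} [Fintype V]

lemma ncard_eq_sum_ind (A : Set V) : (A.ncard : ℤ) = ∑ v, ind (v ∈ A) := by
  classical
  simp [ind_eq_ite, Finset.sum_boole, Set.ncard_eq_toFinset_card']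

lemma sum_ind_eq (c : V) : ∑ v, ind (v = c) = 1 := by
  classical
  simp [ind_eq_ite]

lemma sum_ind_eq_mul (c : V) (f : V → ℤ) : ∑ v, ind (v = c) * f v = f c := by
  classical
  simp [ind_eq_ite]

lemma sum_eq_zero_of_comp_equiv_eq_neg (e : V ≃ V) {f : V → ℤ} (h : ∀ v, f (e v) = -f v) :
    ∑ v, f v = 0 := by
  have := e.sum_comp f
  simp only [h, sum_neg_distrib] at this
  linarith

end Indicator

section DiffCount

variable {V : Type*} [AddCommGroup V] [Fintype V]

lemma diffCount_eq_sum (A B : Set V) (g : V) :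
    (diffCount A B g : ℤ) = ∑ v, ind (v + g ∈ A) * ind (v ∈ B) := by
  have hpairs : {p : V × V | p.1 ∈ A ∧ p.2 ∈ B ∧ p.1 - p.2 = g}
      = (fun v => (v + g, v)) '' {v | v + g ∈ A ∧ v ∈ B} := by
    ext ⟨a, b⟩
    simp only [Set.mem_ofPred_eq, Set.mem_image, Prod.mk.injEq]
    constructor
    · rintro ⟨ha, hb, rfl⟩
      exact ⟨b, ⟨by rwa [add_sub_cancel], hb⟩, add_sub_cancel b a, rfl⟩
    · rintro ⟨v, ⟨hA, hB⟩, rfl, rfl⟩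
      exact ⟨hA, hB, add_sub_cancel_left v g⟩
  rw [diffCount, hpairs, Set.ncard_image_of_injective _ fun v w h => (Prod.mk.inj h).2,
    ncard_eq_sum_ind]
  simp only [Set.mem_ofPred_eq, ind_and]

lemma diffCount_compl_left_add (A B : Set V) (g : V) :
    diffCount Aᶜ B g + diffCount A B g = B.ncard := by
  zify
  simp only [diffCount_eq_sum, ncard_eq_sum_ind, ← sum_add_distrib, Set.mem_compl_iff, ind_not]
  exact sum_congr rfl fun v _ => by ring

lemma diffCount_compl_right_add (A B : Set V) (g : V) :
    diffCount A Bᶜ g + diffCount A B g = A.ncard := by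
  zify
  simp only [diffCount_eq_sum, ncard_eq_sum_ind, ← sum_add_distrib, Set.mem_compl_iff, ind_not]
  have htranslate : ∑ v, ind (v + g ∈ A) = ∑ v, ind (v ∈ A) :=
    Fintype.sum_equiv (Equiv.addRight g) _ _ fun _ => rfl
  rw [← htranslate]
  exact sum_congr rfl fun v _ => by ring

lemma diffCount_compl_compl (A B : Set V) (g : V) :
    (diffCount Aᶜ Bᶜ g : ℤ) = Fintype.card V - A.ncard - B.ncard + diffCount A B g := by
  have hleft := diffCount_compl_left_add A Bᶜ g
  have hright := diffCount_compl_right_add A B g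
  have hB := Set.ncard_add_ncard_compl B
  rw [Nat.card_eq_fintype_card] at hB
  omega

end DiffCount

section Layers

lemma ncard_layers {V : Type*} [Finite V] (X Y : Set V) :
    (({0} : Set (ZMod 2)) ×ˢ X ∪ ({1} : Set (ZMod 2)) ×ˢ Y).ncard = X.ncard + Y.ncard := by
  rw [Set.ncard_union_eq (Set.disjoint_prod.2 (.inl (Set.disjoint_singleton.2 (by decide)))),
    Set.ncard_prod, Set.ncard_prod]
  simp

lemma ncard_layers_compl {V : Type*} [Fintype V] {X Y : Set V} (h : X.ncard = Y.ncard) :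
    (({0} : Set (ZMod 2)) ×ˢ X ∪ ({1} : Set (ZMod 2)) ×ˢ Yᶜ).ncard = Fintype.card V := by
  rw [ncard_layers, h, Set.ncard_add_ncard_compl, Nat.card_eq_fintype_card]

lemma sum_zmod_two {M : Type*} [AddCommMonoid M] (f : ZMod 2 → M) : ∑ a, f a = f 0 + f 1 :=
  Fin.sum_univ_two f

variable {V : Type*} [AddCommGroup V] [Fintype V]

lemma diffCount_layers_zero (X Y X' Y' : Set V) (x : V) :
    diffCount (({0} : Set (ZMod 2)) ×ˢ X ∪ ({1} : Set (ZMod 2)) ×ˢ Y)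
        (({0} : Set (ZMod 2)) ×ˢ X' ∪ ({1} : Set (ZMod 2)) ×ˢ Y') (0, x)
      = diffCount X X' x + diffCount Y Y' x := by
  zify
  simp only [diffCount_eq_sum, Fintype.sum_prod_type]
  rw [sum_zmod_two]
  simp [Prod.mk_add_mk, Set.mem_prod]

lemma diffCount_layers_one (X Y X' Y' : Set V) (x : V) :
    diffCount (({0} : Set (ZMod 2)) ×ˢ X ∪ ({1} : Set (ZMod 2)) ×ˢ Y)
        (({0} : Set (ZMod 2)) ×ˢ X' ∪ ({1} : Set (ZMod 2)) ×ˢ Y') (1, x)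
      = diffCount Y X' x + diffCount X Y' x := by
  zify
  simp only [diffCount_eq_sum, Fintype.sum_prod_type]
  rw [sum_zmod_two]
  simp [Prod.mk_add_mk, Set.mem_prod, show (1 + 1 : ZMod 2) = 0 from rfl]

lemma sum_diffCount_layers_zero (D₀ D₂ E₀ E₁ E₂ E₃ : Set V) (x : V) :
    (diffCount (({0} : Set (ZMod 2)) ×ˢ D₀ ∪ ({1} : Set (ZMod 2)) ×ˢ D₀ᶜ)
        (({0} : Set (ZMod 2)) ×ˢ D₀ ∪ ({1} : Set (ZMod 2)) ×ˢ D₀ᶜ) (0, x)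
      + diffCount (({0} : Set (ZMod 2)) ×ˢ D₂ ∪ ({1} : Set (ZMod 2)) ×ˢ D₂)
        (({0} : Set (ZMod 2)) ×ˢ D₂ ∪ ({1} : Set (ZMod 2)) ×ˢ D₂) (0, x)
      + diffCount (({0} : Set (ZMod 2)) ×ˢ E₀ ∪ ({1} : Set (ZMod 2)) ×ˢ E₁ᶜ)
        (({0} : Set (ZMod 2)) ×ˢ E₀ ∪ ({1} : Set (ZMod 2)) ×ˢ E₁ᶜ) (0, x)
      + diffCount (({0} : Set (ZMod 2)) ×ˢ E₂ ∪ ({1} : Set (ZMod 2)) ×ˢ E₃ᶜ)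
        (({0} : Set (ZMod 2)) ×ˢ E₂ ∪ ({1} : Set (ZMod 2)) ×ˢ E₃ᶜ) (0, x) : ℤ)
      = 2 * ((diffCount D₀ D₀ x : ℤ) + diffCount D₂ D₂ x) + 3 * Fintype.card V
        - 2 * (D₀.ncard + E₁.ncard + E₃.ncard)
        + (diffCount E₀ E₀ x + diffCount E₁ E₁ x + diffCount E₂ E₂ x + diffCount E₃ E₃ x) := by
  simp only [diffCount_layers_zero, Nat.cast_add, diffCount_compl_compl]
  ring

lemma sum_diffCount_layers_one (D₀ D₂ E₀ E₁ E₂ E₃ : Set V) (x : V) :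
    (diffCount (({0} : Set (ZMod 2)) ×ˢ D₀ ∪ ({1} : Set (ZMod 2)) ×ˢ D₀ᶜ)
        (({0} : Set (ZMod 2)) ×ˢ D₀ ∪ ({1} : Set (ZMod 2)) ×ˢ D₀ᶜ) (1, x)
      + diffCount (({0} : Set (ZMod 2)) ×ˢ D₂ ∪ ({1} : Set (ZMod 2)) ×ˢ D₂)
        (({0} : Set (ZMod 2)) ×ˢ D₂ ∪ ({1} : Set (ZMod 2)) ×ˢ D₂) (1, x)
      + diffCount (({0} : Set (ZMod 2)) ×ˢ E₀ ∪ ({1} : Set (ZMod 2)) ×ˢ E₁ᶜ)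
        (({0} : Set (ZMod 2)) ×ˢ E₀ ∪ ({1} : Set (ZMod 2)) ×ˢ E₁ᶜ) (1, x)
      + diffCount (({0} : Set (ZMod 2)) ×ˢ E₂ ∪ ({1} : Set (ZMod 2)) ×ˢ E₃ᶜ)
        (({0} : Set (ZMod 2)) ×ˢ E₂ ∪ ({1} : Set (ZMod 2)) ×ˢ E₃ᶜ) (1, x) : ℤ)
      = 2 * (D₀.ncard + E₀.ncard + E₂.ncard) - 2 * ((diffCount D₀ D₀ x : ℤ) - diffCount D₂ D₂ x)
        - (diffCount E₀ E₁ x + diffCount E₁ E₀ x + diffCount E₂ E₃ x + diffCount E₃ E₂ x) := by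
  have := diffCount_compl_left_add D₀ D₀ x
  have := diffCount_compl_right_add D₀ D₀ x
  have := diffCount_compl_left_add E₁ E₀ x
  have := diffCount_compl_right_add E₀ E₁ x
  have := diffCount_compl_left_add E₃ E₂ x
  have := diffCount_compl_right_add E₂ E₃ x
  simp only [diffCount_layers_one]
  push_cast
  linarith

end Layers

section DiscreteLog

variable {F : Type*} [Field F] {ω : F} {N : ℕ}

open Classical in
/-- The exponent of `x` to the base `ω`, read in `ZMod N`, with the junk value `0` when `x` is not
a power of `ω`. -/
noncomputable def dlog (ω : F) (N : ℕ) (x : F) : ZMod N :=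
  if h : ∃ k : ℕ, ω ^ k = x then (h.choose : ZMod N) else 0

lemma dlog_zero (hω0 : ω ≠ 0) : dlog ω N 0 = 0 :=
  dif_neg fun ⟨_, hk⟩ => pow_ne_zero _ hω0 hk

lemma zero_notMem_cyc (hω0 : ω ≠ 0) (N : ℕ) (i : ℤ) : (0 : F) ∉ cyc ω N i :=
  fun ⟨_, hk⟩ => zpow_ne_zero _ hω0 hk.symm

variable [Fintype F]

lemma isPrimitiveRoot_of_forall_eq_pow (hF : 2 < Fintype.card F)
    (hω : ∀ x : F, x ≠ 0 → ∃ k : ℕ, x = ω ^ k) : IsPrimitiveRoot ω (Fintype.card F - 1) := by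
  classical
  have hω0 : ω ≠ 0 := by
    rintro rfl
    have hsub : (univ : Finset F) ⊆ {0, 1} := fun x _ => by
      obtain hx | hx := eq_or_ne x 0
      · simp [hx]
      · obtain ⟨k, rfl⟩ := hω x hx
        rcases k with _ | k <;> simp
    have := card_le_card hsub
    rw [card_univ] at this
    exact absurd (this.trans card_le_two) (by omega)
  have hgen : ∀ g : Fˣ, g ∈ Subgroup.zpowers (Units.mk0 ω hω0) := fun g => by
    obtain ⟨k, hk⟩ := hω g g.ne_zero
    exact ⟨k, Units.ext (by simp [hk])⟩
  rw [IsPrimitiveRoot.iff_orderOf, ← Units.val_mk0 hω0, orderOf_units,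
    orderOf_eq_card_of_forall_mem_zpowers hgen, Nat.card_units, Nat.card_eq_fintype_card]

lemma IsPrimitiveRoot.ne_zero_of_card (hω : IsPrimitiveRoot ω (Fintype.card F - 1)) : ω ≠ 0 :=
  hω.ne_zero (by have := Fintype.one_lt_card (α := F); omega)

lemma IsPrimitiveRoot.exists_pow_eq (hω : IsPrimitiveRoot ω (Fintype.card F - 1)) {x : F}
    (hx : x ≠ 0) : ∃ k : ℕ, ω ^ k = x := by
  have : NeZero (Fintype.card F - 1) := ⟨by have := Fintype.one_lt_card (α := F); omega⟩
  obtain ⟨k, -, hk⟩ := hω.eq_pow_of_pow_eq_one (FiniteField.pow_card_sub_one_eq_one x hx)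
  exact ⟨k, hk⟩

lemma intCast_eq_of_zpow_eq (hω : IsPrimitiveRoot ω (Fintype.card F - 1))
    (hN : N ∣ Fintype.card F - 1) {a b : ℤ} (h : ω ^ a = ω ^ b) : (a : ZMod N) = b := by
  have hω0 := hω.ne_zero_of_card
  have hdvd : ((Fintype.card F - 1 : ℕ) : ℤ) ∣ b - a := by
    rw [← hω.zpow_eq_one_iff_dvd, zpow_sub₀ hω0, h, div_self (zpow_ne_zero _ hω0)]
  exact (ZMod.intCast_eq_intCast_iff_dvd_sub _ _ _).2 ((Int.natCast_dvd_natCast.2 hN).trans hdvd)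

lemma dlog_zpow_self (hω : IsPrimitiveRoot ω (Fintype.card F - 1))
    (hN : N ∣ Fintype.card F - 1) (m : ℤ) : dlog ω N (ω ^ m) = m := by
  have hex := hω.exists_pow_eq (zpow_ne_zero m hω.ne_zero_of_card)
  rw [dlog, dif_pos hex]
  have := intCast_eq_of_zpow_eq (N := N) hω hN (a := hex.choose) (b := m)
    (by rw [zpow_natCast]; exact hex.choose_spec)
  exact_mod_cast this

lemma dlog_pow_self (hω : IsPrimitiveRoot ω (Fintype.card F - 1))
    (hN : N ∣ Fintype.card F - 1) (k : ℕ) : dlog ω N (ω ^ k) = k := by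
  exact_mod_cast dlog_zpow_self hω hN k

lemma dlog_one (hω : IsPrimitiveRoot ω (Fintype.card F - 1)) (hN : N ∣ Fintype.card F - 1) :
    dlog ω N 1 = 0 := by
  simpa using dlog_pow_self hω hN 0

lemma dlog_mul (hω : IsPrimitiveRoot ω (Fintype.card F - 1)) (hN : N ∣ Fintype.card F - 1)
    {x y : F} (hx : x ≠ 0) (hy : y ≠ 0) : dlog ω N (x * y) = dlog ω N x + dlog ω N y := by
  obtain ⟨a, rfl⟩ := hω.exists_pow_eq hx
  obtain ⟨b, rfl⟩ := hω.exists_pow_eq hy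
  rw [← pow_add, dlog_pow_self hω hN, dlog_pow_self hω hN, dlog_pow_self hω hN, Nat.cast_add]

lemma dlog_pow (hω : IsPrimitiveRoot ω (Fintype.card F - 1)) (hN : N ∣ Fintype.card F - 1)
    (x : F) (m : ℕ) : dlog ω N (x ^ m) = m * dlog ω N x := by
  obtain rfl | hx := eq_or_ne x 0
  · rcases m with _ | m
    · rw [pow_zero, dlog_one hω hN, Nat.cast_zero, zero_mul]
    · simp [dlog_zero hω.ne_zero_of_card]
  obtain ⟨a, rfl⟩ := hω.exists_pow_eq hx
  rw [← pow_mul, dlog_pow_self hω hN, dlog_pow_self hω hN, Nat.cast_mul, mul_comm]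

lemma dlog_neg_one (hω : IsPrimitiveRoot ω (Fintype.card F - 1))
    (h2N : 2 * N ∣ Fintype.card F - 1) : dlog ω N (-1) = 0 := by
  obtain ⟨k, hk⟩ := hω.exists_pow_eq (neg_ne_zero.2 (one_ne_zero (α := F)))
  have hsq : ω ^ (k * 2) = 1 := by rw [pow_mul, hk, neg_one_sq]
  obtain ⟨c, hc⟩ := h2N.trans ((hω.pow_eq_one_iff_dvd _).1 hsq)
  rw [← hk, dlog_pow_self hω (dvd_trans (dvd_mul_left N 2) h2N), ZMod.natCast_eq_zero_iff]
  exact ⟨c, by linarith⟩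

lemma mem_cyc_iff (hω : IsPrimitiveRoot ω (Fintype.card F - 1)) (hN : N ∣ Fintype.card F - 1)
    {x : F} {i : ℤ} : x ∈ cyc ω N i ↔ x ≠ 0 ∧ dlog ω N x = i := by
  constructor
  · rintro ⟨k, rfl⟩
    refine ⟨zpow_ne_zero _ hω.ne_zero_of_card, ?_⟩
    rw [dlog_zpow_self hω hN]
    simp
  · rintro ⟨hx, hdlog⟩
    obtain ⟨k, rfl⟩ := hω.exists_pow_eq hx
    rw [dlog_pow_self hω hN, ← Int.cast_natCast, ZMod.intCast_eq_intCast_iff_dvd_sub] at hdlog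
    obtain ⟨c, hc⟩ := hdlog
    exact ⟨-c, by rw [← zpow_natCast]; congr 1; linarith⟩

lemma ind_mem_cyc_of_ne_zero (hω : IsPrimitiveRoot ω (Fintype.card F - 1))
    (hN : N ∣ Fintype.card F - 1) {v : F} (hv : v ≠ 0) (i : ℤ) :
    ind (v ∈ cyc ω N i) = if dlog ω N v = i then 1 else 0 := by
  simp only [mem_cyc_iff hω hN, hv, ne_eq, not_false_eq_true, true_and]
  rw [ind_eq_ite]

end DiscreteLog

section QuarticClasses

def classSign (k : ZMod 4) : ℤ := if k = 0 ∨ k = 1 then 1 else -1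

/-- The quadratic character on the class `C_k`. -/
def paritySign (k : ZMod 4) : ℤ := if k = 0 ∨ k = 2 then 1 else -1

variable {F : Type*} [Field F] {ω : F}

noncomputable def halfSign (ω v : F) : ℤ :=
  ind (v ∈ cyc ω 4 0 ∪ cyc ω 4 1) - ind (v ∈ cyc ω 4 2 ∪ cyc ω 4 3)

lemma halfSign_zero (hω0 : ω ≠ 0) : halfSign ω 0 = 0 := by
  simp [halfSign, ind_neg, zero_notMem_cyc hω0]

variable [Fintype F]

lemma halfSign_of_ne_zero (hω : IsPrimitiveRoot ω (Fintype.card F - 1))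
    (h4 : 4 ∣ Fintype.card F - 1) {v : F} (hv : v ≠ 0) :
    halfSign ω v = classSign (dlog ω 4 v) := by
  simp only [halfSign, Set.mem_union, mem_cyc_iff hω h4, hv, ne_eq, not_false_eq_true, true_and,
    Int.cast_ofNat, Int.cast_zero, Int.cast_one]
  rw [ind_eq_ite, ind_eq_ite]
  generalize dlog ω 4 v = k
  revert k
  decide

lemma ind_mem_D₀_add_ind_mem_D₂ (hω : IsPrimitiveRoot ω (Fintype.card F - 1))
    (h4 : 4 ∣ Fintype.card F - 1) (v : F) :
    ind (v ∈ cyc ω 4 0 ∪ cyc ω 4 1) + ind (v ∈ cyc ω 4 2 ∪ cyc ω 4 3) = 1 - ind (v = 0) := by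
  obtain rfl | hv := eq_or_ne v 0
  · simp [ind_pos, ind_neg, zero_notMem_cyc hω.ne_zero_of_card]
  rw [ind_neg hv]
  simp only [Set.mem_union, mem_cyc_iff hω h4, hv, ne_eq, not_false_eq_true, true_and,
    Int.cast_ofNat, Int.cast_zero, Int.cast_one]
  rw [ind_eq_ite, ind_eq_ite]
  generalize dlog ω 4 v = k
  revert k
  decide

lemma halfSign_pow_two_mul (hω : IsPrimitiveRoot ω (Fintype.card F - 1))
    (h4 : 4 ∣ Fintype.card F - 1) (v : F) : halfSign ω (ω ^ 2 * v) = -halfSign ω v := by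
  have hω0 := hω.ne_zero_of_card
  obtain rfl | hv := eq_or_ne v 0
  · simp [halfSign_zero hω0]
  rw [halfSign_of_ne_zero hω h4 hv, halfSign_of_ne_zero hω h4 (by positivity),
    dlog_mul hω h4 (by positivity) hv, dlog_pow_self hω h4]
  generalize dlog ω 4 v = k
  revert k
  decide

lemma sum_halfSign (hω : IsPrimitiveRoot ω (Fintype.card F - 1))
    (h4 : 4 ∣ Fintype.card F - 1) : ∑ v, halfSign ω v = 0 :=
  sum_eq_zero_of_comp_equiv_eq_neg (Equiv.mulLeft₀ _ (pow_ne_zero 2 hω.ne_zero_of_card))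
    (halfSign_pow_two_mul hω h4)

lemma halfSign_neg (hω : IsPrimitiveRoot ω (Fintype.card F - 1))
    (h8 : 8 ∣ Fintype.card F - 1) (v : F) : halfSign ω (-v) = halfSign ω v := by
  have h4 : 4 ∣ Fintype.card F - 1 := dvd_trans (by norm_num) h8
  obtain rfl | hv := eq_or_ne v 0
  · rw [neg_zero]
  rw [neg_eq_neg_one_mul, halfSign_of_ne_zero hω h4 (by simpa using hv),
    halfSign_of_ne_zero hω h4 hv, dlog_mul hω h4 (by norm_num) hv, dlog_neg_one hω h8, zero_add]

lemma two_mul_ncard_D₀_add_one (hω : IsPrimitiveRoot ω (Fintype.card F - 1))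
    (h4 : 4 ∣ Fintype.card F - 1) : 2 * (cyc ω 4 0 ∪ cyc ω 4 1).ncard + 1 = Fintype.card F := by
  have hsum := sum_halfSign hω h4
  have hpart := sum_congr rfl fun v (_ : v ∈ univ) => ind_mem_D₀_add_ind_mem_D₂ hω h4 v
  simp only [halfSign, sum_sub_distrib, sum_add_distrib, sum_ind_eq, sum_const, card_univ,
    nsmul_eq_mul, mul_one] at hsum hpart
  have key : 2 * ((cyc ω 4 0 ∪ cyc ω 4 1).ncard : ℤ) + 1 = Fintype.card F := by
    rw [ncard_eq_sum_ind]
    linarith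
  exact_mod_cast key

lemma ncard_D₂_eq_ncard_D₀ (hω : IsPrimitiveRoot ω (Fintype.card F - 1))
    (h4 : 4 ∣ Fintype.card F - 1) :
    (cyc ω 4 2 ∪ cyc ω 4 3).ncard = (cyc ω 4 0 ∪ cyc ω 4 1).ncard := by
  have hsum := sum_halfSign hω h4
  simp only [halfSign, sum_sub_distrib, ← ncard_eq_sum_ind] at hsum
  omega

lemma sum_ind_mem_cyc_zero_sub_ind_mem_cyc_two (hω : IsPrimitiveRoot ω (Fintype.card F - 1))
    (h4 : 4 ∣ Fintype.card F - 1) : ∑ w, (ind (w ∈ cyc ω 4 0) - ind (w ∈ cyc ω 4 2)) = 0 := by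
  have hω0 := hω.ne_zero_of_card
  refine sum_eq_zero_of_comp_equiv_eq_neg (Equiv.mulLeft₀ _ (pow_ne_zero 2 hω0)) fun w => ?_
  obtain rfl | hw := eq_or_ne w 0
  · simp [ind_neg, zero_notMem_cyc hω0]
  have hw' : ω ^ 2 * w ≠ 0 := by positivity
  simp only [Equiv.mulLeft₀_apply, ind_mem_cyc_of_ne_zero hω h4 hw,
    ind_mem_cyc_of_ne_zero hω h4 hw', dlog_mul hω h4 (pow_ne_zero 2 hω0) hw, dlog_pow_self hω h4,
    Int.cast_ofNat, Int.cast_zero]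
  generalize dlog ω 4 w = k
  revert k
  decide

end QuarticClasses

section Frobenius

lemma eight_dvd_card_sub_one {F : Type*} [Fintype F] {q : ℕ} (hq4 : q % 4 = 3)
    (hF : Fintype.card F = q ^ 2) : 8 ∣ Fintype.card F - 1 :=
  hF ▸ Nat.eight_dvd_sq_sub_one_of_odd (Nat.odd_iff.2 (by omega))

variable {F : Type*} [Field F] [Fintype F] {q : ℕ}

lemma add_pow_of_card_eq_pow (hq : IsPrimePow q) {m : ℕ} (hF : Fintype.card F = q ^ m)
    (a b : F) : (a + b) ^ q = a ^ q + b ^ q := by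
  obtain ⟨p, e, hp, -, rfl⟩ := hq
  rw [← Nat.prime_iff] at hp
  obtain ⟨n, hr, hcard⟩ := FiniteField.card F (ringChar F)
  have hchar : ringChar F = p := by
    have hdvd : ringChar F ∣ p ^ (e * m) := by
      rw [pow_mul, ← hF, hcard]
      exact dvd_pow_self _ n.ne_zero
    exact (Nat.prime_dvd_prime_iff_eq hr hp).1 (hr.dvd_of_dvd_pow hdvd)
  have : Fact p.Prime := ⟨hp⟩
  have : CharP F p := hchar ▸ ringChar.charP F
  exact add_pow_char_pow a b p e

lemma involutive_pow_of_card_eq_sq (hF : Fintype.card F = q ^ 2) :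
    Function.Involutive fun x : F => x ^ q := fun x => by
  dsimp only
  rw [← pow_mul, ← sq, ← hF, FiniteField.pow_card]

lemma dlog_pow_of_mod_four_eq_three {ω : F} (hω : IsPrimitiveRoot ω (Fintype.card F - 1))
    (h4 : 4 ∣ Fintype.card F - 1) (hq4 : q % 4 = 3) (x : F) :
    dlog ω 4 (x ^ q) = -dlog ω 4 x := by
  rw [dlog_pow hω h4, ← ZMod.natCast_mod, hq4]
  generalize dlog ω 4 x = k
  revert k
  decide

end Frobenius

section Autocorrelation

variable {F : Type*} [Field F] [Fintype F] {ω : F}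

-- With `v = x * s⁻¹` one has `v + x = v * (1 + s)`, and `dlog v = dlog x - dlog s`.
lemma halfSign_mul_halfSign_add_eq (hω : IsPrimitiveRoot ω (Fintype.card F - 1))
    (h4 : 4 ∣ Fintype.card F - 1) {x : F} (hx : x ≠ 0) (s : F) :
    halfSign ω (x * s⁻¹) * halfSign ω (x * s⁻¹ + x)
      = ind (1 + s ∈ cyc ω 4 0) - ind (1 + s ∈ cyc ω 4 2) - ind (s = 0)
        + paritySign (dlog ω 4 x) *
          (paritySign (dlog ω 4 s) * (ind (1 + s ∈ cyc ω 4 1) - ind (1 + s ∈ cyc ω 4 3))) := by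
  have hω0 := hω.ne_zero_of_card
  obtain rfl | hs := eq_or_ne s 0
  · simp only [inv_zero, mul_zero, halfSign_zero hω0, zero_mul, add_zero,
      ind_mem_cyc_of_ne_zero hω h4 one_ne_zero, dlog_one hω h4, ind_pos]
    simp +decide
  rw [show x * s⁻¹ + x = x * s⁻¹ * (1 + s) by field_simp, ind_neg hs]
  obtain hs1 | hs1 := eq_or_ne (1 + s) 0
  · simp [hs1, halfSign_zero hω0, ind_neg, zero_notMem_cyc hω0]
  have hxs : x * s⁻¹ ≠ 0 := by positivity
  have hdlog : dlog ω 4 (x * s⁻¹) = dlog ω 4 x - dlog ω 4 s := by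
    rw [eq_sub_iff_add_eq, ← dlog_mul hω h4 hxs hs, inv_mul_cancel_right₀ hs]
  rw [halfSign_of_ne_zero hω h4 hxs, halfSign_of_ne_zero hω h4 (mul_ne_zero hxs hs1),
    dlog_mul hω h4 hxs hs1, hdlog]
  simp only [ind_mem_cyc_of_ne_zero hω h4 hs1, Int.cast_ofNat, Int.cast_zero, Int.cast_one]
  generalize dlog ω 4 x = a
  generalize dlog ω 4 s = t
  generalize dlog ω 4 (1 + s) = b
  revert a t b
  decide

-- The Frobenius `s ↦ s ^ q` swaps `C₁` and `C₃` and fixes the quadratic character.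
lemma sum_paritySign_mul_cyc_one_sub_cyc_three_eq_zero {q : ℕ} (hq : IsPrimePow q)
    (hq4 : q % 4 = 3) (hF : Fintype.card F = q ^ 2) (hω : IsPrimitiveRoot ω (Fintype.card F - 1)) :
    ∑ s, paritySign (dlog ω 4 s) * (ind (1 + s ∈ cyc ω 4 1) - ind (1 + s ∈ cyc ω 4 3)) = 0 := by
  have h4 : 4 ∣ Fintype.card F - 1 := dvd_trans (by norm_num) (eight_dvd_card_sub_one hq4 hF)
  refine sum_eq_zero_of_comp_equiv_eq_neg
    (Function.Involutive.toPerm _ (involutive_pow_of_card_eq_sq hF)) fun s => ?_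
  have hfrob : 1 + s ^ q = (1 + s) ^ q := by rw [add_pow_of_card_eq_pow hq hF, one_pow]
  simp only [Function.Involutive.coe_toPerm, hfrob, dlog_pow_of_mod_four_eq_three hω h4 hq4]
  obtain hw | hw := eq_or_ne (1 + s) 0
  · have hq0 : q ≠ 0 := by omega
    simp [hw, hq0, ind_neg, zero_notMem_cyc hω.ne_zero_of_card]
  simp only [ind_mem_cyc_of_ne_zero hω h4 hw, ind_mem_cyc_of_ne_zero hω h4 (pow_ne_zero q hw),
    dlog_pow_of_mod_four_eq_three hω h4 hq4, Int.cast_ofNat, Int.cast_one]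
  generalize dlog ω 4 s = t
  generalize dlog ω 4 (1 + s) = b
  revert t b
  decide

lemma sum_halfSign_mul_halfSign_add {q : ℕ} (hq : IsPrimePow q) (hq4 : q % 4 = 3)
    (hF : Fintype.card F = q ^ 2) (hω : IsPrimitiveRoot ω (Fintype.card F - 1)) {x : F}
    (hx : x ≠ 0) : ∑ v, halfSign ω v * halfSign ω (v + x) = -1 := by
  have h4 : 4 ∣ Fintype.card F - 1 := dvd_trans (by norm_num) (eight_dvd_card_sub_one hq4 hF)
  have hinvol : Function.Involutive fun s : F => x * s⁻¹ := fun s => by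
    dsimp only
    rw [mul_inv_rev, inv_inv, mul_comm s, ← mul_assoc, mul_inv_cancel₀ hx, one_mul]
  have htranslate := Equiv.sum_comp (Equiv.addLeft (1 : F))
    fun w => ind (w ∈ cyc ω 4 0) - ind (w ∈ cyc ω 4 2)
  simp only [Equiv.coe_addLeft] at htranslate
  rw [← Equiv.sum_comp (hinvol.toPerm _)]
  simp only [Function.Involutive.coe_toPerm, halfSign_mul_halfSign_add_eq hω h4 hx,
    sum_add_distrib, ← mul_sum, sum_paritySign_mul_cyc_one_sub_cyc_three_eq_zero hq hq4 hF hω,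
    mul_zero, add_zero]
  rw [sum_sub_distrib, htranslate, sum_ind_mem_cyc_zero_sub_ind_mem_cyc_two hω h4, sum_ind_eq,
    zero_sub]

end Autocorrelation

section Correlation

variable {F : Type*} [Field F] [Fintype F] {ω : F}

lemma two_mul_diffCount_D₀_add_diffCount_D₂ {q : ℕ} (hq : IsPrimePow q) (hq4 : q % 4 = 3)
    (hF : Fintype.card F = q ^ 2) (hω : IsPrimitiveRoot ω (Fintype.card F - 1)) {x : F}
    (hx : x ≠ 0) :
    2 * ((diffCount (cyc ω 4 0 ∪ cyc ω 4 1) (cyc ω 4 0 ∪ cyc ω 4 1) x : ℤ)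
      + diffCount (cyc ω 4 2 ∪ cyc ω 4 3) (cyc ω 4 2 ∪ cyc ω 4 3) x) = Fintype.card F - 3 := by
  have h4 : 4 ∣ Fintype.card F - 1 := dvd_trans (by norm_num) (eight_dvd_card_sub_one hq4 hF)
  have hpoint : ∀ v : F,
      2 * (ind (v + x ∈ cyc ω 4 0 ∪ cyc ω 4 1) * ind (v ∈ cyc ω 4 0 ∪ cyc ω 4 1)
        + ind (v + x ∈ cyc ω 4 2 ∪ cyc ω 4 3) * ind (v ∈ cyc ω 4 2 ∪ cyc ω 4 3))
      = 1 - ind (v = -x) - ind (v = 0) + ind (v = -x) * ind (v = 0)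
        + halfSign ω v * halfSign ω (v + x) := fun v => by
    have hv := ind_mem_D₀_add_ind_mem_D₂ hω h4 v
    have hvx := ind_mem_D₀_add_ind_mem_D₂ hω h4 (v + x)
    rw [ind_congr add_eq_zero_iff_eq_neg] at hvx
    simp only [halfSign]
    linear_combination (ind (v ∈ cyc ω 4 0 ∪ cyc ω 4 1) + ind (v ∈ cyc ω 4 2 ∪ cyc ω 4 3)) * hvx
      + (1 - ind (v = -x)) * hv
  rw [diffCount_eq_sum, diffCount_eq_sum, ← sum_add_distrib, mul_sum,
    sum_congr rfl fun v _ => hpoint v]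
  simp only [sum_add_distrib, sum_sub_distrib, sum_const, card_univ, nsmul_eq_mul, mul_one,
    sum_ind_eq, sum_ind_eq_mul, ind_neg (neg_ne_zero.2 hx),
    sum_halfSign_mul_halfSign_add hq hq4 hF hω hx]
  ring

lemma diffCount_D₀_sub_diffCount_D₂ (hω : IsPrimitiveRoot ω (Fintype.card F - 1))
    (h8 : 8 ∣ Fintype.card F - 1) (x : F) :
    (diffCount (cyc ω 4 0 ∪ cyc ω 4 1) (cyc ω 4 0 ∪ cyc ω 4 1) x : ℤ)
      - diffCount (cyc ω 4 2 ∪ cyc ω 4 3) (cyc ω 4 2 ∪ cyc ω 4 3) x = -halfSign ω x := by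
  have h4 : 4 ∣ Fintype.card F - 1 := dvd_trans (by norm_num) h8
  have hpoint : ∀ v : F,
      2 * (ind (v + x ∈ cyc ω 4 0 ∪ cyc ω 4 1) * ind (v ∈ cyc ω 4 0 ∪ cyc ω 4 1)
        - ind (v + x ∈ cyc ω 4 2 ∪ cyc ω 4 3) * ind (v ∈ cyc ω 4 2 ∪ cyc ω 4 3))
      = halfSign ω v - ind (v = -x) * halfSign ω v
        + (halfSign ω (v + x) - ind (v = 0) * halfSign ω (v + x)) := fun v => by
    have hv := ind_mem_D₀_add_ind_mem_D₂ hω h4 v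
    have hvx := ind_mem_D₀_add_ind_mem_D₂ hω h4 (v + x)
    rw [ind_congr add_eq_zero_iff_eq_neg] at hvx
    simp only [halfSign]
    linear_combination (ind (v ∈ cyc ω 4 0 ∪ cyc ω 4 1) - ind (v ∈ cyc ω 4 2 ∪ cyc ω 4 3)) * hvx
      + (ind (v + x ∈ cyc ω 4 0 ∪ cyc ω 4 1) - ind (v + x ∈ cyc ω 4 2 ∪ cyc ω 4 3)) * hv
  have htranslate := Equiv.sum_comp (Equiv.addRight x) (halfSign ω)
  simp only [Equiv.coe_addRight] at htranslate
  have hsum : 2 * ((diffCount (cyc ω 4 0 ∪ cyc ω 4 1) (cyc ω 4 0 ∪ cyc ω 4 1) x : ℤ)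
      - diffCount (cyc ω 4 2 ∪ cyc ω 4 3) (cyc ω 4 2 ∪ cyc ω 4 3) x) = -2 * halfSign ω x := by
    rw [diffCount_eq_sum, diffCount_eq_sum, ← sum_sub_distrib, mul_sum,
      sum_congr rfl fun v _ => hpoint v]
    simp only [sum_add_distrib, sum_sub_distrib, sum_ind_eq_mul, htranslate, sum_halfSign hω h4,
      halfSign_neg hω h8, zero_add]
    ring
  linarith

end Correlation

theorem stmt_5 (q : ℕ) (hq : IsPrimePow q) (h4 : q % 4 = 3)
    (F : Type*) [Field F] [Fintype F] (hF : Fintype.card F = q ^ 2)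
    (ω : F) (hω : ∀ x : F, x ≠ 0 → ∃ k : ℕ, x = ω ^ k)
    (E₀ E₁ E₂ E₃ : Set F)
    (hE₀ : E₀.ncard = (q ^ 2 - q) / 2) (hE₁ : E₁.ncard = (q ^ 2 - q) / 2)
    (hE₂ : E₂.ncard = (q ^ 2 - q) / 2) (hE₃ : E₃.ncard = (q ^ 2 - q) / 2)
    (hH : ∀ x : F, x ≠ 0 →
      diffCount E₀ E₀ x + diffCount E₁ E₁ x + diffCount E₂ E₂ x + diffCount E₃ E₃ x
        = q ^ 2 - 2 * q)
    (hMix : ∀ x : F,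
      (diffCount E₀ E₁ x + diffCount E₁ E₀ x + diffCount E₂ E₃ x + diffCount E₃ E₂ x : ℤ)
        = ((q : ℤ) - 1) ^ 2 + 2 * ind (x ∈ cyc ω 4 0 ∪ cyc ω 4 1)
            - 2 * ind (x ∈ cyc ω 4 2 ∪ cyc ω 4 3)) :
    let D₀ : Set F := cyc ω 4 0 ∪ cyc ω 4 1
    let D₂ : Set F := cyc ω 4 2 ∪ cyc ω 4 3
    let B₀ : Set (ZMod 2 × F) := ({0} : Set (ZMod 2)) ×ˢ D₀ ∪ ({1} : Set (ZMod 2)) ×ˢ D₀ᶜ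
    let B₁ : Set (ZMod 2 × F) := ({0} : Set (ZMod 2)) ×ˢ D₂ ∪ ({1} : Set (ZMod 2)) ×ˢ D₂
    let B₂ : Set (ZMod 2 × F) := ({0} : Set (ZMod 2)) ×ˢ E₀ ∪ ({1} : Set (ZMod 2)) ×ˢ E₁ᶜ
    let B₃ : Set (ZMod 2 × F) := ({0} : Set (ZMod 2)) ×ˢ E₂ ∪ ({1} : Set (ZMod 2)) ×ˢ E₃ᶜ
    B₀.ncard = q ^ 2 ∧ B₁.ncard = q ^ 2 - 1 ∧ B₂.ncard = q ^ 2 ∧ B₃.ncard = q ^ 2 ∧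
    ∀ g : ZMod 2 × F, g ≠ 0 →
      diffCount B₀ B₀ g + diffCount B₁ B₁ g + diffCount B₂ B₂ g + diffCount B₃ B₃ g
        = 2 * q ^ 2 - 2 := by
  dsimp only
  have hq3 : 3 ≤ q := by omega
  have hq2 : 2 * q ≤ q ^ 2 := by nlinarith
  have h8 := eight_dvd_card_sub_one h4 hF
  have h4' : 4 ∣ Fintype.card F - 1 := dvd_trans (by norm_num) h8
  have hω' := isPrimitiveRoot_of_forall_eq_pow (by rw [hF]; nlinarith) hω
  have hD₀ := two_mul_ncard_D₀_add_one hω' h4'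
  have hE : ∀ E : Set F, E.ncard = (q ^ 2 - q) / 2 → 2 * (E.ncard : ℤ) = q ^ 2 - q := by
    intro E hE
    have hodd : q ^ 2 % 2 = 1 := by rw [Nat.pow_mod, show q % 2 = 1 by omega]
    have : 2 * E.ncard + q = q ^ 2 := by omega
    exact_mod_cast (by linarith [this] : (2 * E.ncard : ℤ) = q ^ 2 - q)
  refine ⟨by rw [ncard_layers_compl rfl, hF], ?_,
    by rw [ncard_layers_compl (hE₀.trans hE₁.symm), hF],
    by rw [ncard_layers_compl (hE₂.trans hE₃.symm), hF], ?_⟩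
  · rw [ncard_layers, ncard_D₂_eq_ncard_D₀ hω' h4']
    omega
  rintro ⟨ε, x⟩ hg
  have h22 : 2 ≤ 2 * q ^ 2 := by nlinarith
  obtain rfl | rfl : ε = 0 ∨ ε = 1 := (by decide : ∀ a : ZMod 2, a = 0 ∨ a = 1) ε
  · have hx : x ≠ 0 := by rintro rfl; exact hg rfl
    have hHx := hH x hx
    zify [hq2, h22] at hHx ⊢
    rw [sum_diffCount_layers_zero]
    linarith [two_mul_diffCount_D₀_add_diffCount_D₂ hq h4 hF hω' hx, hE E₁ hE₁, hE E₃ hE₃]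
  · zify [h22]
    rw [sum_diffCount_layers_one, diffCount_D₀_sub_diffCount_D₂ hω' h8, hMix, halfSign]
    linarith [hE E₀ hE₀, hE E₂ hE₂]
end

section
/- Let n be a positive integer and let G be a finite abelian group of order 2n. Suppose there exist subsets B₀, B₁, B₂, B₃ ⊆ G with |B₀| = |B₁| = |B₂| = n and |B₃| = n − 1 such that for every nonzero g ∈ G, N(B₀,B₀;g) + N(B₁,B₁;g) + N(B₂,B₂;g) + N(B₃,B₃;g) = 2n − 2 (i.e., {B₀,B₁,B₂,B₃} is a difference family of type H₄* with parameters (2n; n, n, n, n−1; 2n−2) in G). Then there exists a Hadamard matrix of order 4(2n + 1), i.e., a square integer matrix H of size 4(2n+1) with all entries equal to 1 or −1 such that H · Hᵀ = 4(2n+1) · I. -/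
/-!
Goethals–Seidel: if `A₀, …, A₃` are `±1` matrices of order `m` that commute with one another
and with one another's transposes, `R` is a symmetric involutory permutation matrix with
`R Aᵢᵀ = Aᵢ R`, and `∑ Aᵢ Aᵢᵀ = 4m I`, then the array of the blocks `A₀`, `±Aᵢ R`, `±Aᵢᵀ R`
is a Hadamard matrix of order `4m`.

Here `m = 2n + 1`: `Aᵢ` is the `G`-developed matrix of the `±1` vector of `Bᵢ`, bordered by
ones and the corner `εᵢ = -1, -1, -1, 1`, and `R` permutes the indices by `g ↦ -g`. The sizes
`kᵢ` make the core row sum `2n - 2kᵢ` equal to `εᵢ + 1`, which makes the bordered matrices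
commute. The autocorrelation of the `±1` vector of `B` at `d` is `v - 4k + 4 N(B,B;d)`, so the
`H₄*` condition `∑ N(Bᵢ,Bᵢ;d) = ∑ kᵢ - (v + 1)` is exactly what makes `∑ Aᵢ Aᵢᵀ` vanish off
the diagonal.
-/

open Matrix

section Reindexing

variable {G M : Type*} [AddCommGroup G] [Fintype G] [AddCommMonoid M]

lemma sum_comp_sub_right (f : G → M) (a : G) : ∑ x, f (x - a) = ∑ x, f x :=
  (Equiv.subRight a).sum_comp f

lemma sum_comp_sub_left (f : G → M) (a : G) : ∑ x, f (a - x) = ∑ x, f x :=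
  (Equiv.subLeft a).sum_comp f

lemma sum_comp_neg (f : G → M) : ∑ x, f (-x) = ∑ x, f x :=
  Equiv.sum_comp (Equiv.neg G) f

end Reindexing

section SignVector

lemma diffCount_eq_ncard {G : Type*} [AddCommGroup G] (A B : Set G) (d : G) :
    diffCount A B d = {u | u ∈ A ∧ u - d ∈ B}.ncard := by
  have hinj : Function.Injective fun u : G => (u, u - d) := fun _ _ h => congrArg Prod.fst h
  rw [diffCount, ← Set.ncard_image_of_injective _ hinj]
  congr 1
  ext ⟨u, v⟩
  simp only [Set.mem_ofPred_eq, Set.mem_image, Prod.mk.injEq]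
  constructor
  · rintro ⟨hu, hv, rfl⟩
    exact ⟨u, ⟨hu, by rwa [sub_sub_cancel]⟩, rfl, sub_sub_cancel u v⟩
  · rintro ⟨u, ⟨hu, hv⟩, rfl, rfl⟩
    exact ⟨hu, hv, sub_sub_cancel u d⟩

lemma diffCount_self_zero {G : Type*} [AddCommGroup G] (B : Set G) :
    diffCount B B 0 = B.ncard := by
  simp [diffCount_eq_ncard]

variable {G : Type*}

open Classical in
noncomputable def signVector (B : Set G) (g : G) : ℤ := if g ∈ B then -1 else 1

lemma signVector_eq_one_or (B : Set G) (g : G) : signVector B g = 1 ∨ signVector B g = -1 := by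
  unfold signVector; split_ifs <;> simp

variable [Fintype G]

lemma sum_ite_mem_eq_ncard (S : Set G) [DecidablePred (· ∈ S)] :
    ∑ g, (if g ∈ S then (1 : ℤ) else 0) = S.ncard := by
  rw [Finset.sum_boole, Set.ncard_eq_toFinset_card']
  congr
  ext
  simp

lemma sum_signVector (B : Set G) : ∑ g, signVector B g = Fintype.card G - 2 * B.ncard := by
  classical
  have h (g : G) : signVector B g = 1 - 2 * if g ∈ B then 1 else 0 := by
    unfold signVector; split_ifs <;> norm_num
  simp only [h, Finset.sum_sub_distrib, ← Finset.mul_sum, sum_ite_mem_eq_ncard]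
  simp

variable [AddCommGroup G]

lemma sum_signVector_mul_signVector_sub (B : Set G) (d : G) :
    ∑ z, signVector B z * signVector B (z - d) =
      Fintype.card G - 4 * B.ncard + 4 * diffCount B B d := by
  classical
  have h (z : G) : signVector B z * signVector B (z - d) =
      1 - 2 * (if z ∈ B then 1 else 0) - 2 * (if z - d ∈ B then 1 else 0) +
        4 * if z ∈ {u | u ∈ B ∧ u - d ∈ B} then 1 else 0 := by
    unfold signVector; split_ifs <;> simp_all
  simp only [h, Finset.sum_add_distrib, Finset.sum_sub_distrib, ← Finset.mul_sum,
    sum_comp_sub_right (fun z => if z ∈ B then (1 : ℤ) else 0), sum_ite_mem_eq_ncard, diffCount_eq_ncard]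
  simp
  ring

end SignVector

section Bordered

variable {G α : Type*} [AddCommGroup G]

def bordered (a b c : α) (f : G → α) : Matrix (Option G) (Option G) α :=
  Matrix.of fun
    | none, none => a
    | none, some _ => b
    | some _, none => c
    | some g, some h => f (g - h)

@[simp] lemma bordered_none_none (a b c : α) (f : G → α) : bordered a b c f none none = a := rfl
@[simp] lemma bordered_none_some (a b c : α) (f : G → α) (h : G) :
    bordered a b c f none (some h) = b := rfl
@[simp] lemma bordered_some_none (a b c : α) (f : G → α) (g : G) :
    bordered a b c f (some g) none = c := rfl
@[simp] lemma bordered_some_some (a b c : α) (f : G → α) (g h : G) :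
    bordered a b c f (some g) (some h) = f (g - h) := rfl

lemma transpose_bordered (a b c : α) (f : G → α) :
    (bordered a b c f)ᵀ = bordered a c b (fun d => f (-d)) := by
  ext (_ | _) (_ | _) <;> simp

lemma sum_bordered {ι : Type*} [AddCommMonoid α] (s : Finset ι) (a b c : ι → α)
    (f : ι → G → α) :
    ∑ i ∈ s, bordered (a i) (b i) (c i) (f i) =
      bordered (∑ i ∈ s, a i) (∑ i ∈ s, b i) (∑ i ∈ s, c i) (∑ i ∈ s, f i) := by
  ext (_ | _) (_ | _) <;> simp [Matrix.sum_apply]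

lemma bordered_single_eq_smul_one [DecidableEq G] [Semiring α] (a : α) :
    bordered a 0 0 (Pi.single (0 : G) a) = a • 1 := by
  ext (_ | g) (_ | h) <;> simp [one_apply, Pi.single_apply, sub_eq_zero]

variable (G) in
def negOption : Equiv.Perm (Option G) := Equiv.optionCongr (Equiv.neg G)

lemma negOption_involutive : Function.Involutive (negOption G) := by
  rintro (_ | g) <;> simp [negOption]

lemma toMatrix_negOption_mul_transpose_bordered [DecidableEq G] [Fintype G] [Semiring α]
    (a b : α) (f : G → α) :
    (negOption G).toPEquiv.toMatrix * (bordered a b b f)ᵀ =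
      bordered a b b f * (negOption G).toPEquiv.toMatrix := by
  rw [PEquiv.toMatrix_toPEquiv_mul, PEquiv.mul_toMatrix_toPEquiv,
    negOption_involutive.symm_eq_self_of_involutive]
  ext (_ | g) (_ | h) <;> simp [negOption, add_comm]

variable [Fintype G]

lemma bordered_mul [Semiring α] (a b c a' b' c' : α) (f f' : G → α) :
    bordered a b c f * bordered a' b' c' f' =
      bordered (a * a' + Fintype.card G • (b * c')) (a * b' + b * ∑ g, f' g)
        (c * a' + (∑ g, f g) * c') (fun d => c * b' + ∑ z, f z * f' (d - z)) := by
  ext (_ | g) (_ | h) <;> simp only [mul_apply, Fintype.sum_option, bordered_none_none,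
    bordered_none_some, bordered_some_none, bordered_some_some]
  · simp
  · rw [← Finset.mul_sum, sum_comp_sub_right f' h]
  · rw [← Finset.sum_mul, sum_comp_sub_left f g]
  · rw [← sum_comp_sub_left _ g]
    simp_rw [sub_sub_cancel, sub_right_comm]

variable [CommSemiring α]

lemma sum_mul_sub_comm (f f' : G → α) (d : G) :
    ∑ z, f z * f' (d - z) = ∑ z, f' z * f (d - z) := by
  rw [← sum_comp_sub_left _ d]
  simp_rw [sub_sub_cancel, mul_comm]

/-- The border entries of the two products are `ε + ∑ f'` and `ε' + ∑ f`, both equal to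
`ε + ε' + 1`; the cores commute because convolution on `G` does. -/
lemma commute_bordered {ε ε' : α} {f f' : G → α} (hf : ∑ g, f g = ε + 1)
    (hf' : ∑ g, f' g = ε' + 1) : Commute (bordered ε 1 1 f) (bordered ε' 1 1 f') := by
  rw [Commute, SemiconjBy, bordered_mul, bordered_mul, hf, hf']
  simp_rw [sum_mul_sub_comm f f']
  congr 1 <;> ring

end Bordered

lemma bordered_signVector_mul_transpose {G : Type*} [AddCommGroup G] [Fintype G] (ε : ℤ)
    (B : Set G) :
    bordered ε 1 1 (signVector B) * (bordered ε 1 1 (signVector B))ᵀ =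
      bordered (ε ^ 2 + Fintype.card G) (ε + Fintype.card G - 2 * B.ncard)
        (ε + Fintype.card G - 2 * B.ncard)
        (fun d => 1 + Fintype.card G - 4 * B.ncard + 4 * diffCount B B d) := by
  rw [transpose_bordered, bordered_mul]
  simp only [sum_comp_neg (signVector B), sum_signVector, neg_sub,
    sum_signVector_mul_signVector_sub]
  congr 1
  · rw [nsmul_eq_mul]; ring
  · ring
  · ring
  · funext d; ring

section PermMatrix

variable {I α : Type*} [DecidableEq I] {σ : Equiv.Perm I}

lemma transpose_toMatrix_of_involutive [Zero α] [One α] (hσ : Function.Involutive σ) :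
    (σ.toPEquiv.toMatrix : Matrix I I α)ᵀ = σ.toPEquiv.toMatrix := by
  rw [← PEquiv.toMatrix_symm, ← Equiv.toPEquiv_symm, hσ.symm_eq_self_of_involutive]

lemma toMatrix_mul_self_of_involutive [Fintype I] [Semiring α] (hσ : Function.Involutive σ) :
    (σ.toPEquiv.toMatrix * σ.toPEquiv.toMatrix : Matrix I I α) = 1 := by
  rw [← PEquiv.toMatrix_trans, ← Equiv.toPEquiv_trans,
    show σ.trans σ = Equiv.refl I from Equiv.ext hσ, Equiv.toPEquiv_refl, PEquiv.toMatrix_refl]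

end PermMatrix

section GoethalsSeidel

variable {I α : Type*} [Fintype I] [DecidableEq I]

def goethalsSeidel [Ring α] (A : Fin 4 → Matrix I I α) (R : Matrix I I α) :
    Matrix (Fin 4 × I) (Fin 4 × I) α :=
  comp _ _ _ _ _ !![A 0, A 1 * R, A 2 * R, A 3 * R;
    -(A 1 * R), A 0, (A 3)ᵀ * R, -((A 2)ᵀ * R);
    -(A 2 * R), -((A 3)ᵀ * R), A 0, (A 1)ᵀ * R;
    -(A 3 * R), (A 2)ᵀ * R, -((A 1)ᵀ * R), A 0]

/-- Once every product of blocks is written as a word in the `Aᵢ`, `Aᵢᵀ` followed by at most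
one `R`, the off-diagonal blocks cancel in pairs by commutativity. -/
theorem goethalsSeidel_mul_transpose [CommRing α] {A : Fin 4 → Matrix I I α}
    {R : Matrix I I α} {c : α} (hRR : R * R = 1) (hRT : Rᵀ = R)
    (hRA : ∀ i, R * (A i)ᵀ = A i * R) (hcomm : ∀ i j, Commute (A i) (A j))
    (hcommT : ∀ i j, Commute (A i) (A j)ᵀ) (hsq : ∑ i, A i * (A i)ᵀ = c • 1) :
    goethalsSeidel A R * (goethalsSeidel A R)ᵀ = c • 1 := by
  have hRA' (i : Fin 4) : R * A i = (A i)ᵀ * R := by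
    rw [← mul_one (R * A i), ← hRR, ← mul_assoc, mul_assoc R, ← hRA, ← mul_assoc, hRR, one_mul]
  have hRA₁ (i : Fin 4) (X : Matrix I I α) : R * (A i * X) = (A i)ᵀ * (R * X) := by
    rw [← mul_assoc, hRA', mul_assoc]
  have hRA₂ (i : Fin 4) (X : Matrix I I α) : R * ((A i)ᵀ * X) = A i * (R * X) := by
    rw [← mul_assoc, hRA, mul_assoc]
  have hcomm₁ (i j : Fin 4) : A i * A j = A j * A i := (hcomm i j).eq
  have hcomm₂ (i j : Fin 4) : A i * (A j)ᵀ = (A j)ᵀ * A i := (hcommT i j).eq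
  have hcomm₃ (i j : Fin 4) : (A i)ᵀ * (A j)ᵀ = (A j)ᵀ * (A i)ᵀ := by
    rw [← transpose_mul, ← transpose_mul, hcomm₁]
  rw [goethalsSeidel, transpose_comp, ← compAlgEquiv_apply _ _ _ α, ← compAlgEquiv_apply _ _ _ α,
    ← map_mul, ← map_one (compAlgEquiv (Fin 4) I α α), ← map_smul]
  congr 1
  ext i k : 1
  rw [Matrix.mul_apply]
  fin_cases i <;> fin_cases k <;>
    simp [Fin.sum_univ_four, ← hsq, mul_assoc, hRT, hRR, hRA, hRA', hRA₁, hRA₂] <;>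
    simp only [← mul_assoc, hcomm₁, hcomm₂, hcomm₃] <;>
    abel

lemma goethalsSeidel_apply_eq_one_or {A : Fin 4 → Matrix I I ℤ} (σ : Equiv.Perm I)
    (hA : ∀ i x y, A i x y = 1 ∨ A i x y = -1) (p q : Fin 4 × I) :
    goethalsSeidel A σ.toPEquiv.toMatrix p q = 1 ∨
      goethalsSeidel A σ.toPEquiv.toMatrix p q = -1 := by
  have hneg (z : ℤ) (hz : z = 1 ∨ z = -1) : -z = 1 ∨ -z = -1 := by omega
  obtain ⟨i, x⟩ := p
  obtain ⟨k, y⟩ := q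
  simp only [goethalsSeidel, comp_apply, PEquiv.mul_toMatrix_toPEquiv]
  fin_cases i <;> fin_cases k <;>
    simp only [Fin.isValue, Fin.zero_eta, Fin.mk_one, Fin.reduceFinMk, of_apply, cons_val',
      cons_val, cons_val_zero, cons_val_one, cons_val_fin_one, Matrix.neg_apply, submatrix_apply,
      id_eq, transpose_apply] <;>
    first | exact hA _ _ _ | exact hneg _ (hA _ _ _)

theorem isHadamard_goethalsSeidel [Nonempty I] {A : Fin 4 → Matrix I I ℤ} {σ : Equiv.Perm I}
    (hσ : Function.Involutive σ) (hA : ∀ i x y, A i x y = 1 ∨ A i x y = -1)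
    (hRA : ∀ i, σ.toPEquiv.toMatrix * (A i)ᵀ = A i * σ.toPEquiv.toMatrix)
    (hcomm : ∀ i j, Commute (A i) (A j)) (hcommT : ∀ i j, Commute (A i) (A j)ᵀ)
    (hsq : ∑ i, A i * (A i)ᵀ = (4 * Fintype.card I : ℤ) • 1) :
    (goethalsSeidel A σ.toPEquiv.toMatrix).IsHadamard := by
  have hcard : (Fintype.card (Fin 4 × I) : ℤ) = 4 * Fintype.card I := by simp
  refine .of_mul_conjTranspose (fun p q => ?_) ?_ ?_
  · exact Unitary.mem_iff_eq_one_or_eq_neg_one.mpr (goethalsSeidel_apply_eq_one_or σ hA p q)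
  · rw [conjTranspose_eq_transpose_of_trivial, hcard]
    exact goethalsSeidel_mul_transpose (toMatrix_mul_self_of_involutive hσ)
      (transpose_toMatrix_of_involutive hσ) hRA hcomm hcommT hsq
  · rw [hcard]
    exact .of_ne_zero (by positivity)

end GoethalsSeidel

section SignBlocks

variable {G : Type*} [AddCommGroup G] [Fintype G]

noncomputable def signBlocks (ε : Fin 4 → ℤ) (B : Fin 4 → Set G) :
    Fin 4 → Matrix (Option G) (Option G) ℤ :=
  fun i => bordered (ε i) 1 1 (signVector (B i))

variable [DecidableEq G] {ε : Fin 4 → ℤ} {B : Fin 4 → Set G}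

lemma sum_signBlocks_mul_transpose (hε : ∀ i, ε i = 1 ∨ ε i = -1)
    (hrow : ∀ i, (Fintype.card G : ℤ) - 2 * (B i).ncard = ε i + 1) (hεsum : ∑ i, ε i = -2)
    (hDF : ∀ d : G, d ≠ 0 →
      ∑ i, (diffCount (B i) (B i) d : ℤ) = ∑ i, ((B i).ncard : ℤ) - Fintype.card G - 1) :
    ∑ i, signBlocks ε B i * (signBlocks ε B i)ᵀ = (4 * Fintype.card (Option G) : ℤ) • 1 := by
  have hsq (i : Fin 4) : ε i ^ 2 = 1 := by rcases hε i with h | h <;> simp [h]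
  simp only [signBlocks, bordered_signVector_mul_transpose, sum_bordered]
  rw [← bordered_single_eq_smul_one]
  congr 1
  · simp [hsq]
    ring
  · simp [add_sub_assoc, hrow, Finset.sum_add_distrib, hεsum]
  · simp [add_sub_assoc, hrow, Finset.sum_add_distrib, hεsum]
  · funext d
    simp only [Finset.sum_apply, Finset.sum_add_distrib, Finset.sum_sub_distrib, ← Finset.mul_sum]
    rcases eq_or_ne d 0 with rfl | hd
    · simp [diffCount_self_zero]
      ring
    · simp [hDF d hd, hd]
      ring

theorem isHadamard_goethalsSeidel_signBlocks (hε : ∀ i, ε i = 1 ∨ ε i = -1)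
    (hrow : ∀ i, (Fintype.card G : ℤ) - 2 * (B i).ncard = ε i + 1) (hεsum : ∑ i, ε i = -2)
    (hDF : ∀ d : G, d ≠ 0 →
      ∑ i, (diffCount (B i) (B i) d : ℤ) = ∑ i, ((B i).ncard : ℤ) - Fintype.card G - 1) :
    (goethalsSeidel (signBlocks ε B) (negOption G).toPEquiv.toMatrix).IsHadamard := by
  have hsum (i : Fin 4) : ∑ g, signVector (B i) g = ε i + 1 := by rw [sum_signVector, hrow]
  have hsumT (i : Fin 4) : ∑ g, signVector (B i) (-g) = ε i + 1 := by
    rw [sum_comp_neg (signVector (B i)), hsum]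
  refine isHadamard_goethalsSeidel negOption_involutive (fun i x y => ?_)
    (fun i => toMatrix_negOption_mul_transpose_bordered _ _ _)
    (fun i j => commute_bordered (hsum i) (hsum j))
    (fun i j => ?_) (sum_signBlocks_mul_transpose hε hrow hεsum hDF)
  · cases x <;> cases y <;> simp [signBlocks, hε, signVector_eq_one_or]
  · simp only [signBlocks, transpose_bordered]
    exact commute_bordered (hsum i) (hsumT j)

end SignBlocks

lemma exists_fin_of_isHadamard {ι : Type*} [Fintype ι] [DecidableEq ι] {H : Matrix ι ι ℤ}
    (hH : H.IsHadamard) {m : ℕ} (hm : Fintype.card ι = m) :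
    ∃ H' : Matrix (Fin m) (Fin m) ℤ,
      (∀ i j, H' i j = 1 ∨ H' i j = -1) ∧ H' * H'.transpose = (m : ℤ) • 1 := by
  have hH' := hH.reindex (Fintype.equivFinOfCardEq hm) (Fintype.equivFinOfCardEq hm)
  refine ⟨_, fun i j => Unitary.mem_iff_eq_one_or_eq_neg_one.mp (hH'.apply_mem i j), ?_⟩
  simpa [conjTranspose_eq_transpose_of_trivial] using hH'.mul_conjTranspose

theorem stmt_16_general (n : ℕ)
    (G : Type*) [AddCommGroup G] [Fintype G] (hG : Fintype.card G = 2 * n)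
    (B₀ B₁ B₂ B₃ : Set G)
    (hB₀ : B₀.ncard = n) (hB₁ : B₁.ncard = n) (hB₂ : B₂.ncard = n)
    (hB₃ : B₃.ncard = n - 1)
    (hDF : ∀ g : G, g ≠ 0 →
      diffCount B₀ B₀ g + diffCount B₁ B₁ g + diffCount B₂ B₂ g + diffCount B₃ B₃ g
        = 2 * n - 2) :
    ∃ H : Matrix (Fin (4 * (2 * n + 1))) (Fin (4 * (2 * n + 1))) ℤ,
      (∀ i j, H i j = 1 ∨ H i j = -1) ∧
      H * H.transpose = (4 * (2 * n + 1) : ℤ) • 1 := by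
  classical
  have hn : 0 < n := by have := Fintype.card_pos (α := G); omega
  have hH := isHadamard_goethalsSeidel_signBlocks (ε := ![-1, -1, -1, 1])
    (B := ![B₀, B₁, B₂, B₃]) (fun i => by fin_cases i <;> simp)
    (fun i => by fin_cases i <;> simp [hG, hB₀, hB₁, hB₂, hB₃, Nat.cast_sub hn, mul_sub])
    (by simp [Fin.sum_univ_four])
    (fun d hd => by
      have := hDF d hd
      simp [Fin.sum_univ_four, hG, hB₀, hB₁, hB₂, hB₃]
      omega)
  exact exists_fin_of_isHadamard hH (by simp [hG])

theorem stmt_16 (n : ℕ) (hn : 0 < n)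
    (G : Type*) [AddCommGroup G] [Fintype G] (hG : Fintype.card G = 2 * n)
    (B₀ B₁ B₂ B₃ : Set G)
    (hB₀ : B₀.ncard = n) (hB₁ : B₁.ncard = n) (hB₂ : B₂.ncard = n)
    (hB₃ : B₃.ncard = n - 1)
    (hDF : ∀ g : G, g ≠ 0 →
      diffCount B₀ B₀ g + diffCount B₁ B₁ g + diffCount B₂ B₂ g + diffCount B₃ B₃ g
        = 2 * n - 2) :
    ∃ H : Matrix (Fin (4 * (2 * n + 1))) (Fin (4 * (2 * n + 1))) ℤ,
      (∀ i j, H i j = 1 ∨ H i j = -1) ∧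
      H * H.transpose = (4 * (2 * n + 1) : ℤ) • 1 :=
  stmt_16_general n G hG B₀ B₁ B₂ B₃ hB₀ hB₁ hB₂ hB₃ hDF
end
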